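/- arXiv:1908.06563 — 7 statements merged into one kernel-verified Lean document; each statement's English description precedes it below -/
import Mathlib

section
/- Let G be a finite simplicial complex and h : G → {−1, 1}. With L(x,y) = Σ_{u∈G, u⊆x, u⊆y} h(u) and g(x,y) = ω(x)ω(y) Σ_{u∈G, x⊆u, y⊆u} h(u), where ω(x)=(−1)^(|x|−1), the matrix g is the inverse of L: L·g = I. -/
/-! With the zeta matrix `Z x y = [x ⊆ y]` of the face poset and the diagonal matrices
`H = diag h`, `Ω = diag ω`, one has `L = Zᵀ H Z` and `g = Ω Z H Zᵀ Ω`. Every interval `[x, y]` of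
the face poset is a full Boolean lattice, so `∑_{x ⊆ z ⊆ y} ω z = [x = y] ω x`, i.e. `Z Ω Z = Ω`.
As `H² = Ω² = 1` and diagonal matrices commute,
`L g = Zᵀ H (Z Ω Z) H Zᵀ Ω = Zᵀ Ω Zᵀ Ω = (Z Ω Z)ᵀ Ω = Ω² = 1`. -/

open Finset Matrix

theorem Finset.sum_Icc_neg_one_pow_card {α R : Type*} [DecidableEq α] [Ring R]
    {s t : Finset α} (hst : s ⊆ t) :
    ∑ z ∈ Icc s t, (-1 : R) ^ #z = if s = t then (-1) ^ #s else 0 := by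
  have hdisj : ∀ w ∈ (t \ s).powerset, Disjoint s w := fun w hw =>
    disjoint_of_subset_right (mem_powerset.1 hw) disjoint_sdiff
  have hinj : Set.InjOn (s ∪ ·) ((t \ s).powerset : Set (Finset α)) := fun w₁ hw₁ w₂ hw₂ heq => by
    rw [← union_sdiff_cancel_left (hdisj w₁ hw₁), ← union_sdiff_cancel_left (hdisj w₂ hw₂)]
    exact congrArg (· \ s) heq
  have hpow : ∑ w ∈ (t \ s).powerset, (-1 : R) ^ #w = if t \ s = ∅ then 1 else 0 := by
    exact_mod_cast congrArg (Int.cast : ℤ → R) (sum_powerset_neg_one_pow_card (x := t \ s))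
  rw [Icc_eq_image_powerset hst, sum_image hinj,
    sum_congr rfl fun w hw => by rw [card_union_of_disjoint (hdisj w hw), pow_add],
    ← mul_sum, hpow]
  rcases eq_or_ne s t with rfl | hne
  · simp
  · have hts : ¬t ⊆ s := fun hts => hne (subset_antisymm hst hts)
    simp [hne, sdiff_eq_empty_iff_subset, hts]

theorem Finset.neg_one_pow_card_sub_one {α R : Type*} [Ring R] {s : Finset α}
    (hs : s.Nonempty) : (-1 : R) ^ (#s - 1) = -(-1) ^ #s := by
  obtain ⟨n, hn⟩ := Nat.exists_eq_add_one_of_ne_zero hs.card_pos.ne'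
  simp [hn, pow_succ]

theorem Finset.sum_Icc_neg_one_pow_card_sub_one {α R : Type*} [DecidableEq α] [Ring R]
    {s t : Finset α} (hs : s.Nonempty) (hst : s ⊆ t) :
    ∑ z ∈ Icc s t, (-1 : R) ^ (#z - 1) = if s = t then (-1) ^ (#s - 1) else 0 := by
  rw [sum_congr rfl fun z hz => neg_one_pow_card_sub_one (hs.mono (mem_Icc.1 hz).1),
    sum_neg_distrib, sum_Icc_neg_one_pow_card hst, neg_one_pow_card_sub_one hs]
  split_ifs <;> simp

theorem Matrix.mul_eq_one_of_mul_diagonal_mul_eq_diagonal {n R : Type*} [Fintype n]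
    [DecidableEq n] [CommSemiring R] {Z : Matrix n n R} {d e : n → R}
    (hZ : Z * diagonal d * Z = diagonal d) (hd : ∀ i, d i * d i = 1) (he : ∀ i, e i * e i = 1) :
    (Zᵀ * diagonal e * Z) * (diagonal d * Z * diagonal e * Zᵀ * diagonal d) = 1 := by
  have hede : diagonal e * diagonal d * diagonal e = diagonal d := by
    simp only [diagonal_mul_diagonal, mul_right_comm _ (d _), he, one_mul]
  calc (Zᵀ * diagonal e * Z) * (diagonal d * Z * diagonal e * Zᵀ * diagonal d)
      = Zᵀ * (diagonal e * (Z * diagonal d * Z) * diagonal e) * Zᵀ * diagonal d := by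
        simp only [Matrix.mul_assoc]
    _ = Zᵀ * diagonal d * Zᵀ * diagonal d := by rw [hZ, hede]
    _ = (Z * diagonal d * Z)ᵀ * diagonal d := by
        simp only [transpose_mul, diagonal_transpose, Matrix.mul_assoc]
    _ = 1 := by rw [hZ, diagonal_transpose, diagonal_mul_diagonal, ← diagonal_one]; simp [hd]

section FaceZeta

variable {α : Type*} [DecidableEq α] (R : Type*) (G : Finset (Finset α))

def faceZeta [Zero R] [One R] : Matrix G G R :=
  of fun x y => if x.1 ⊆ y.1 then 1 else 0

section CommSemiring

variable {R} [CommSemiring R]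

theorem faceZeta_mul_diagonal_mul_faceZeta_apply (e : Finset α → R) (x y : G) :
    (faceZeta R G * diagonal (fun u : G => e u) * faceZeta R G) x y =
      ∑ u ∈ G with x.1 ⊆ u ∧ u ⊆ y.1, e u := by
  rw [sum_filter, ← sum_coe_sort G, mul_apply]
  simp only [mul_diagonal, faceZeta, of_apply]
  refine sum_congr rfl fun u _ => ?_
  split_ifs <;> simp_all

theorem faceZeta_transpose_mul_diagonal_mul_faceZeta_apply (e : Finset α → R) (x y : G) :
    ((faceZeta R G)ᵀ * diagonal (fun u : G => e u) * faceZeta R G) x y =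
      ∑ u ∈ G with u ⊆ x.1 ∧ u ⊆ y.1, e u := by
  rw [sum_filter, ← sum_coe_sort G, mul_apply]
  simp only [mul_diagonal, transpose_apply, faceZeta, of_apply]
  refine sum_congr rfl fun u _ => ?_
  split_ifs <;> simp_all

theorem diagonal_mul_faceZeta_mul_diagonal_mul_faceZeta_transpose_mul_diagonal_apply
    (w e : Finset α → R) (x y : G) :
    (diagonal (fun u : G => w u) * faceZeta R G * diagonal (fun u : G => e u) * (faceZeta R G)ᵀ *
        diagonal (fun u : G => w u)) x y =
      w x * w y * ∑ u ∈ G with x.1 ⊆ u ∧ y.1 ⊆ u, e u := by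
  simp only [Matrix.mul_assoc]
  rw [diagonal_mul, mul_apply, sum_filter, ← sum_coe_sort G, mul_sum, mul_sum]
  simp only [mul_diagonal, diagonal_mul, transpose_apply, faceZeta, of_apply]
  refine sum_congr rfl fun u _ => ?_
  split_ifs <;> simp_all [mul_assoc, mul_comm (e _)]

end CommSemiring

variable {R} [CommRing R]

theorem faceZeta_mul_diagonal_mul_faceZeta (hne : ∀ x ∈ G, x.Nonempty)
    (hclosed : ∀ x ∈ G, ∀ y ⊆ x, y.Nonempty → y ∈ G) :
    faceZeta R G * diagonal (fun u : G => (-1) ^ (#u.1 - 1)) * faceZeta R G =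
      diagonal (fun u : G => (-1) ^ (#u.1 - 1)) := by
  ext x y
  rw [faceZeta_mul_diagonal_mul_faceZeta_apply (e := fun u => (-1 : R) ^ (#u - 1)), diagonal_apply]
  simp only [Subtype.ext_iff]
  by_cases hxy : x.1 ⊆ y.1
  · have hIcc : {u ∈ G | x.1 ⊆ u ∧ u ⊆ y.1} = Icc x.1 y.1 := by
      ext u
      simp only [mem_filter, mem_Icc, and_iff_right_iff_imp, and_imp]
      exact fun hxu huy => hclosed y y.2 u huy ((hne x x.2).mono hxu)
    rw [hIcc, sum_Icc_neg_one_pow_card_sub_one (hne x x.2) hxy]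
  · have hempty : {u ∈ G | x.1 ⊆ u ∧ u ⊆ y.1} = ∅ :=
      filter_false_of_mem fun u _ h => hxy (h.1.trans h.2)
    rw [hempty, sum_empty, if_neg fun h : x.1 = y.1 => hxy (h ▸ subset_rfl)]

end FaceZeta

theorem stmt_4 (G : Finset (Finset ℕ)) (hne : ∀ x ∈ G, x.Nonempty)
    (hclosed : ∀ x ∈ G, ∀ y ⊆ x, y.Nonempty → y ∈ G)
    (h : Finset ℕ → ℝ) (hval : ∀ x ∈ G, h x = 1 ∨ h x = -1)
    (ω : Finset ℕ → ℝ) (hω : ∀ u, ω u = (-1 : ℝ) ^ (u.card - 1))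
    (L g : Matrix {x // x ∈ G} {x // x ∈ G} ℝ)
    (hL : ∀ x y, L x y = ∑ u ∈ G.filter (fun u => u ⊆ x.1 ∧ u ⊆ y.1), h u)
    (hg : ∀ x y, g x y = ω x.1 * ω y.1 *
      ∑ u ∈ G.filter (fun u => x.1 ⊆ u ∧ y.1 ⊆ u), h u) :
    L * g = 1 := by
  have hL' : L = (faceZeta ℝ G)ᵀ * diagonal (fun u : G => h u) * faceZeta ℝ G :=
    ext fun x y => by rw [hL, faceZeta_transpose_mul_diagonal_mul_faceZeta_apply]
  have hg' : g = diagonal (fun u : G => ω u) * faceZeta ℝ G * diagonal (fun u : G => h u) *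
      (faceZeta ℝ G)ᵀ * diagonal (fun u : G => ω u) :=
    ext fun x y => by
      rw [hg, diagonal_mul_faceZeta_mul_diagonal_mul_faceZeta_transpose_mul_diagonal_apply]
  have hω' : (fun u : G => ω u) = fun u => (-1) ^ (#u.1 - 1) := funext fun u => hω u
  rw [hL', hg', hω']
  refine mul_eq_one_of_mul_diagonal_mul_eq_diagonal
    (faceZeta_mul_diagonal_mul_faceZeta G hne hclosed) (fun u => ?_) (fun u => ?_)
  · rw [← pow_add, ← two_mul, pow_mul, neg_one_sq, one_pow]
  · rcases hval u u.2 with hu | hu <;> simp [hu]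
end

section
/- Let G be a finite set of finite nonempty sets and h : G → ℝ. Define L(x,y) = Σ_{u∈G, u⊆x, u⊆y} h(u). Then det(L) = Π_{x∈G} h(x). -/
/-!
Order `G` by inclusion and let `ζ x u = [u ⊆ x]` be its zeta matrix. Then
`L = ζ · diag h · ζᵀ`, and `ζ` is unitriangular with respect to any linear extension of
inclusion, so `det ζ = 1` and `det L = ∏ h`. Only the poset structure of `G` matters.
-/

open Finset Matrix

section Poset

variable (ι R : Type*) [Fintype ι] [DecidableEq ι] [PartialOrder ι] [DecidableLE ι] [CommRing R]

def zetaMatrix : Matrix ι ι R := of fun x u => if u ≤ x then 1 else 0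

variable {ι R}

theorem det_zetaMatrix : (zetaMatrix ι R).det = 1 := by
  let e : LinearExtension ι ≃ ι := Equiv.refl ι
  let : Fintype (LinearExtension ι) := Fintype.ofEquiv ι e.symm
  have hlower : ((zetaMatrix ι R).submatrix e e).IsLowerTriangular := by
    intro i j hij
    have hnle : ¬ e j ≤ e i := fun hle => (toLinearExtension.monotone hle).not_gt hij
    simp [zetaMatrix, hnle]
  rw [← det_submatrix_equiv_self e, det_of_isLowerTriangular _ hlower]
  simp [zetaMatrix]

theorem zetaMatrix_mul_diagonal_mul_transpose (f : ι → R) :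
    zetaMatrix ι R * diagonal f * (zetaMatrix ι R)ᵀ =
      of fun x y => ∑ u with u ≤ x ∧ u ≤ y, f u := by
  ext x y
  rw [mul_apply]
  simp only [mul_diagonal, transpose_apply, zetaMatrix, of_apply, sum_filter]
  refine sum_congr rfl fun u _ => ?_
  by_cases hx : u ≤ x <;> by_cases hy : u ≤ y <;> simp [hx, hy]

theorem det_of_sum_le_and_le (f : ι → R) :
    (of fun x y => ∑ u with u ≤ x ∧ u ≤ y, f u).det = ∏ u, f u := by
  rw [← zetaMatrix_mul_diagonal_mul_transpose, det_mul, det_mul, det_transpose, det_zetaMatrix,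
    det_diagonal, one_mul, mul_one]

end Poset

theorem stmt_5_general (G : Finset (Finset ℕ))
    (h : Finset ℕ → ℝ)
    (L : Matrix {x // x ∈ G} {x // x ∈ G} ℝ)
    (hL : ∀ x y, L x y = ∑ u ∈ G.filter (fun u => u ⊆ x.1 ∧ u ⊆ y.1), h u) :
    L.det = ∏ x ∈ G, h x := by
  classical
  have hL' : L = of fun x y => ∑ u with u ≤ x ∧ u ≤ y, h u.1 := by
    ext x y
    rw [hL, of_apply, sum_filter, sum_filter, ← sum_coe_sort G]
    rfl
  rw [hL', det_of_sum_le_and_le, prod_coe_sort G h]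

theorem stmt_5 (G : Finset (Finset ℕ)) (hne : ∀ x ∈ G, x.Nonempty)
    (h : Finset ℕ → ℝ)
    (L : Matrix {x // x ∈ G} {x // x ∈ G} ℝ)
    (hL : ∀ x y, L x y = ∑ u ∈ G.filter (fun u => u ⊆ x.1 ∧ u ⊆ y.1), h u) :
    L.det = ∏ x ∈ G, h x :=
  stmt_5_general G h L hL
end

section
/- Let G be a finite set of finite nonempty sets and h : G → ℝ with h(x) ≠ 0 for all x. The number of negative eigenvalues of the symmetric matrix L(x,y) = Σ_{u∈G, u⊆x, u⊆y} h(u) equals the number of x ∈ G with h(x) < 0. -/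
/-!
Order `G` by inclusion. With `Z` the zeta matrix of this order (`Z u x = 1` iff `u ⊆ x`), the
definition of `L` says `L = Zᵀ · diag(h) · Z`. Since `Z` is unitriangular with respect to a
linear extension of the order, it is invertible, so the quadratic form of `L` is equivalent to
the weighted sum of squares with weights `h`. The spectral theorem makes it equivalent to the
weighted sum of squares with the eigenvalues as weights, and Sylvester's law of inertia equates
the numbers of negative weights.
-/

open Matrix Finset QuadraticMap

namespace Matrix

variable {n : Type*} [Fintype n] [DecidableEq n]

theorem toQuadraticForm'_apply {R : Type*} [CommRing R] (A : Matrix n n R) (v : n → R) :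
    A.toQuadraticForm' v = v ⬝ᵥ (A *ᵥ v) :=
  toLinearMap₂'_apply' A v v

theorem toQuadraticForm'_transpose_mul_diagonal_mul {R : Type*} [CommRing R] (P : Matrix n n R)
    (d : n → R) (v : n → R) :
    (Pᵀ * diagonal d * P).toQuadraticForm' v = weightedSumSquares R d (P *ᵥ v) := by
  rw [toQuadraticForm'_apply, weightedSumSquares_apply, ← mulVec_mulVec, ← mulVec_mulVec,
    dotProduct_mulVec, vecMul_transpose]
  simp only [dotProduct, mulVec_diagonal, smul_eq_mul]
  exact sum_congr rfl fun i _ => by ring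

theorem equivalent_weightedSumSquares_of_eq_transpose_mul_diagonal_mul {R : Type*} [CommRing R]
    {A P : Matrix n n R} {d : n → R} (hP : IsUnit P) (hA : A = Pᵀ * diagonal d * P) :
    A.toQuadraticForm'.Equivalent (weightedSumSquares R d) :=
  have := hP.invertible
  ⟨⟨P.toLinearEquiv' this, fun v => by
    rw [hA, toQuadraticForm'_transpose_mul_diagonal_mul]; rfl⟩⟩

/-- **Sylvester's law of inertia** for congruent diagonal matrices. -/
theorem card_neg_eq_of_transpose_mul_diagonal_mul_eq {𝕜 : Type*} [Field 𝕜] [LinearOrder 𝕜]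
    [IsStrictOrderedRing 𝕜] {P Q : Matrix n n 𝕜} {d e : n → 𝕜} (hP : IsUnit P) (hQ : IsUnit Q)
    (h : Pᵀ * diagonal d * P = Qᵀ * diagonal e * Q) :
    #{i | d i < 0} = #{i | e i < 0} := by
  have hd := QuadraticForm.sigNeg_of_equiv_weightedSumSquares
    (equivalent_weightedSumSquares_of_eq_transpose_mul_diagonal_mul (d := d) hP rfl)
  have he := QuadraticForm.sigNeg_of_equiv_weightedSumSquares
    (equivalent_weightedSumSquares_of_eq_transpose_mul_diagonal_mul hQ h)
  rw [← Set.ncard_coe_finset, ← Set.ncard_coe_finset]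
  simpa using hd.symm.trans he

theorem IsHermitian.exists_isUnit_eq_transpose_mul_diagonal_mul {A : Matrix n n ℝ}
    (hA : A.IsHermitian) :
    ∃ P : Matrix n n ℝ, IsUnit P ∧ A = Pᵀ * diagonal hA.eigenvalues * P := by
  refine ⟨star (hA.eigenvectorUnitary : Matrix n n ℝ),
    Unitary.isUnit_coe (U := star hA.eigenvectorUnitary), ?_⟩
  conv_lhs => rw [hA.spectral_theorem, Unitary.conjStarAlgAut_apply]
  simp [star_eq_conjTranspose]

section ZetaMatrix

variable (R : Type*) {α : Type*} [CommRing R] [PartialOrder α] [DecidableLE α]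

variable (α) in
def zetaMatrix : Matrix α α R := of fun x y => if x ≤ y then 1 else 0

theorem zetaMatrix_apply (x y : α) : zetaMatrix R α x y = if x ≤ y then 1 else 0 := rfl

theorem blockTriangular_zetaMatrix : (zetaMatrix R α).BlockTriangular toLinearExtension :=
  fun _ _ hlt => if_neg fun hle => (toLinearExtension.monotone hle).not_gt hlt

theorem det_zetaMatrix [Fintype α] [DecidableEq α] : (zetaMatrix R α).det = 1 := by
  rw [(blockTriangular_zetaMatrix R).det]
  refine prod_eq_one fun k _ => ?_
  have : Unique {a // toLinearExtension a = k} := ⟨⟨⟨k, rfl⟩⟩, fun j => Subtype.ext j.2⟩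
  exact (det_unique _).trans (if_pos le_rfl)

theorem transpose_zetaMatrix_mul_diagonal_mul_zetaMatrix_apply [Fintype α] [DecidableEq α]
    (d : α → R) (x y : α) :
    ((zetaMatrix R α)ᵀ * diagonal d * zetaMatrix R α) x y = ∑ u with u ≤ x ∧ u ≤ y, d u := by
  rw [mul_apply, sum_filter]
  simp only [mul_diagonal, transpose_apply, zetaMatrix_apply]
  refine sum_congr rfl fun u _ => ?_
  split_ifs <;> simp_all

theorem isUnit_zetaMatrix [Fintype α] [DecidableEq α] : IsUnit (zetaMatrix R α) :=
  (isUnit_iff_isUnit_det _).2 (by rw [det_zetaMatrix]; exact isUnit_one)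

end ZetaMatrix

end Matrix

theorem stmt_8_general (G : Finset (Finset ℕ))
    (h : Finset ℕ → ℝ)
    (L : Matrix {x // x ∈ G} {x // x ∈ G} ℝ)
    (hL : ∀ x y, L x y = ∑ u ∈ G.filter (fun u => u ⊆ x.1 ∧ u ⊆ y.1), h u)
    (hHerm : L.IsHermitian) :
    (Finset.univ.filter (fun i => hHerm.eigenvalues i < 0)).card
      = (G.filter (fun x => h x < 0)).card := by
  have hzeta : L = (zetaMatrix ℝ G)ᵀ * diagonal (fun u : G => h u) * zetaMatrix ℝ G := by
    ext x y
    rw [hL, transpose_zetaMatrix_mul_diagonal_mul_zetaMatrix_apply, sum_filter, sum_filter,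
      ← sum_coe_sort G]
    rfl
  obtain ⟨P, hP, hspec⟩ := hHerm.exists_isUnit_eq_transpose_mul_diagonal_mul
  rw [card_neg_eq_of_transpose_mul_diagonal_mul_eq hP (isUnit_zetaMatrix ℝ)
    (hspec.symm.trans hzeta), card_filter, card_filter, ← sum_coe_sort G]

theorem stmt_8 (G : Finset (Finset ℕ)) (hne : ∀ x ∈ G, x.Nonempty)
    (h : Finset ℕ → ℝ) (hz : ∀ x ∈ G, h x ≠ 0)
    (L : Matrix {x // x ∈ G} {x // x ∈ G} ℝ)
    (hL : ∀ x y, L x y = ∑ u ∈ G.filter (fun u => u ⊆ x.1 ∧ u ⊆ y.1), h u)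
    (hHerm : L.IsHermitian) :
    (Finset.univ.filter (fun i => hHerm.eigenvalues i < 0)).card
      = (G.filter (fun x => h x < 0)).card :=
  stmt_8_general G h L hL hHerm
end

section
/- Let G be a finite set of finite nonempty sets and h : G → ℝ with h(x) > 0 for all x ∈ G. Then the symmetric matrix L(x,y) = Σ_{u∈G, u⊆x, u⊆y} h(u) is positive definite. -/
/-!
Let `ζ` be the zeta matrix of the inclusion order on `G`, `ζ u x = 1` if `u ⊆ x` and `0` otherwise.
Then `L = ζᵀ * diagonal h * ζ`, and `ζ` is unitriangular for inclusion, hence invertible: at an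
inclusion-maximal `x` with `v x ≠ 0` one has `(ζ *ᵥ v) x = v x`. So `L` is a congruence transform
of a positive diagonal matrix.
-/

open Matrix

namespace Matrix

variable {ι R : Type*}

-- The zeta function of the incidence algebra of `ι`.
def zeta (ι R : Type*) [LE ι] [DecidableLE ι] [Zero R] [One R] : Matrix ι ι R :=
  of fun i j => if i ≤ j then 1 else 0

theorem zeta_apply [LE ι] [DecidableLE ι] [Zero R] [One R] (i j : ι) :
    zeta ι R i j = if i ≤ j then 1 else 0 := rfl

theorem zeta_mulVec_apply [Fintype ι] [LE ι] [DecidableLE ι] [NonAssocSemiring R]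
    (v : ι → R) (i : ι) : (zeta ι R *ᵥ v) i = ∑ j with i ≤ j, v j := by
  simp [mulVec, dotProduct, zeta_apply, Finset.sum_filter]

theorem eq_zero_of_zeta_mulVec_eq_zero [Fintype ι] [PartialOrder ι] [DecidableLE ι]
    [NonAssocSemiring R] {v : ι → R} (hv : zeta ι R *ᵥ v = 0) : v = 0 := by
  by_contra hne
  obtain ⟨i, hi⟩ : ∃ i, v i ≠ 0 := Function.ne_iff.mp hne
  obtain ⟨m, -, hm⟩ := Finite.exists_le_maximal (p := fun i => v i ≠ 0) hi
  have hsum : (zeta ι R *ᵥ v) m = v m := by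
    rw [zeta_mulVec_apply, Finset.sum_eq_single_of_mem m (by simp)]
    intro j hj hjm
    by_contra hvj
    exact hjm (hm.eq_of_le hvj (Finset.mem_filter.mp hj).2).symm
  exact hm.prop (hsum ▸ congrFun hv m)

theorem zeta_mulVec_injective [Fintype ι] [PartialOrder ι] [DecidableLE ι] [Ring R] :
    Function.Injective (zeta ι R).mulVec := fun v w hvw =>
  sub_eq_zero.mp <| eq_zero_of_zeta_mulVec_eq_zero <| by rw [mulVec_sub, hvw, sub_self]

theorem zeta_transpose_mul_diagonal_mul_zeta_apply [Fintype ι] [LE ι] [DecidableLE ι]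
    [DecidableEq ι] [NonAssocSemiring R] (d : ι → R) (i j : ι) :
    ((zeta ι R)ᵀ * diagonal d * zeta ι R) i j = ∑ k with k ≤ i ∧ k ≤ j, d k := by
  rw [mul_apply]
  simp [mul_diagonal, zeta_apply, Finset.sum_filter, ← ite_and, and_comm]

theorem posDef_zeta_transpose_mul_diagonal_mul_zeta [Fintype ι] [PartialOrder ι] [DecidableLE ι]
    [DecidableEq ι] {d : ι → ℝ} (hd : ∀ i, 0 < d i) :
    ((zeta ι ℝ)ᵀ * diagonal d * zeta ι ℝ).PosDef :=
  (PosDef.diagonal hd).conjTranspose_mul_mul_same zeta_mulVec_injective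

end Matrix

theorem stmt_9_general (G : Finset (Finset ℕ))
    (h : Finset ℕ → ℝ) (hpos : ∀ x ∈ G, 0 < h x)
    (L : Matrix {x // x ∈ G} {x // x ∈ G} ℝ)
    (hL : ∀ x y, L x y = ∑ u ∈ G.filter (fun u => u ⊆ x.1 ∧ u ⊆ y.1), h u) :
    L.PosDef := by
  have hζ : L = (zeta G ℝ)ᵀ * diagonal (fun u : G => h u) * zeta G ℝ := by
    ext x y
    rw [hL, zeta_transpose_mul_diagonal_mul_zeta_apply, Finset.sum_filter, Finset.sum_filter,
      ← Finset.sum_coe_sort G]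
    rfl
  exact hζ ▸ posDef_zeta_transpose_mul_diagonal_mul_zeta fun u => hpos u u.2

theorem stmt_9 (G : Finset (Finset ℕ)) (hne : ∀ x ∈ G, x.Nonempty)
    (h : Finset ℕ → ℝ) (hpos : ∀ x ∈ G, 0 < h x)
    (L : Matrix {x // x ∈ G} {x // x ∈ G} ℝ)
    (hL : ∀ x y, L x y = ∑ u ∈ G.filter (fun u => u ⊆ x.1 ∧ u ⊆ y.1), h u) :
    L.PosDef :=
  stmt_9_general G h hpos L hL
end

section
/- Let G be a finite simplicial complex and h : G → ℝ. With g(x,y) = ω(x)ω(y) Σ_{u∈G, x⊆u, y⊆u} h(u) and ω(x)=(−1)^(|x|−1), the sum of all matrix entries of g equals the total energy: Σ_{x,y∈G} g(x,y) = Σ_{x∈G} h(x). -/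
/-! Exchanging the order of summation turns the left side into
`∑ u, h u * (∑_{x ⊆ u} ω x)²`. For a face `u` the faces of `G` inside `u` are exactly the nonempty
subsets of `u`, so the inner sum is the Euler characteristic of a simplex, which is `1`. -/

open Finset

theorem Finset.sum_filter_nonempty_powerset_neg_one_pow_card_sub_one {R α : Type*} [CommRing R]
    {u : Finset α} (hu : u.Nonempty) :
    ∑ x ∈ u.powerset with x.Nonempty, (-1 : R) ^ (#x - 1) = 1 := by
  have h_all : ∑ x ∈ u.powerset, (-1 : R) ^ #x = 0 := by
    simpa using congrArg (Int.cast : ℤ → R) (sum_powerset_neg_one_pow_card_of_nonempty hu)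
  have h_empty : u.powerset.filter (¬ ·.Nonempty) = {∅} := by
    ext x
    simp only [mem_filter, mem_powerset, not_nonempty_iff_eq_empty, mem_singleton]
    exact ⟨And.right, fun hx => ⟨hx ▸ empty_subset u, hx⟩⟩
  rw [← sum_filter_add_sum_filter_not _ Finset.Nonempty, h_empty, sum_singleton] at h_all
  calc ∑ x ∈ u.powerset with x.Nonempty, (-1 : R) ^ (#x - 1)
      = -∑ x ∈ u.powerset with x.Nonempty, (-1 : R) ^ #x := by
        rw [← sum_neg_distrib]
        refine sum_congr rfl fun x hx => ?_
        obtain ⟨k, hk⟩ := Nat.exists_eq_add_of_lt (mem_filter.1 hx).2.card_pos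
        simp [hk, pow_succ]
    _ = 1 := by
        rw [card_empty, pow_zero] at h_all
        linear_combination -h_all

theorem filter_subset_eq_powerset_filter_nonempty {α : Type*} [DecidableEq α]
    {G : Finset (Finset α)} (hne : ∀ x ∈ G, x.Nonempty)
    (hclosed : ∀ x ∈ G, ∀ y ⊆ x, y.Nonempty → y ∈ G) {u : Finset α} (hu : u ∈ G) :
    G.filter (· ⊆ u) = u.powerset.filter Finset.Nonempty := by
  ext x
  simp only [mem_filter, mem_powerset]
  exact ⟨fun ⟨hx, hxu⟩ => ⟨hxu, hne x hx⟩, fun ⟨hxu, hx⟩ => ⟨hclosed u hu x hxu hx, hxu⟩⟩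

theorem Finset.sum_sum_mul_sum_filter_and_eq_sum_sq_mul {ι R : Type*} [CommSemiring R]
    (s : Finset ι) (r : ι → ι → Prop) [DecidableRel r] (f h : ι → R) :
    ∑ x ∈ s, ∑ y ∈ s, f x * f y * ∑ u ∈ s with r x u ∧ r y u, h u
      = ∑ u ∈ s, (∑ x ∈ s with r x u, f x) ^ 2 * h u := by
  calc _ = ∑ x ∈ s, ∑ y ∈ s, ∑ u ∈ s,
          (if r x u then f x else 0) * (if r y u then f y else 0) * h u := by
        simp_rw [sum_filter, mul_sum]
        refine sum_congr rfl fun x _ => sum_congr rfl fun y _ => sum_congr rfl fun u _ => ?_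
        split_ifs <;> simp_all
    _ = ∑ u ∈ s, ∑ x ∈ s, ∑ y ∈ s,
          (if r x u then f x else 0) * (if r y u then f y else 0) * h u :=
        (sum_congr rfl fun _ _ => sum_comm).trans sum_comm
    _ = _ := by simp_rw [sq, sum_filter, sum_mul_sum, sum_mul]

theorem stmt_11 (G : Finset (Finset ℕ)) (hne : ∀ x ∈ G, x.Nonempty)
    (hclosed : ∀ x ∈ G, ∀ y ⊆ x, y.Nonempty → y ∈ G)
    (h : Finset ℕ → ℝ)
    (ω : Finset ℕ → ℝ) (hω : ∀ u, ω u = (-1 : ℝ) ^ (u.card - 1)) :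
    (∑ x ∈ G, ∑ y ∈ G, ω x * ω y * ∑ u ∈ G.filter (fun u => x ⊆ u ∧ y ⊆ u), h u)
      = ∑ x ∈ G, h x := by
  rw [sum_sum_mul_sum_filter_and_eq_sum_sq_mul G (· ⊆ ·)]
  refine sum_congr rfl fun u hu => ?_
  rw [filter_subset_eq_powerset_filter_nonempty hne hclosed hu, funext hω,
    sum_filter_nonempty_powerset_neg_one_pow_card_sub_one (hne u hu), one_pow, one_mul]
end

section
/- Let G be a finite simplicial complex and h : G → ℝ. With g(x,y) = ω(x)ω(y) Σ_{u∈G, x⊆u, y⊆u} h(u), the super trace equals the total energy: Σ_{x∈G} ω(x) g(x,x) = Σ_{x∈G} h(x). -/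
/-!
Since `ω x ^ 2 = 1`, the super trace is `∑ₓ ω x ∑_{u ⊇ x} h u`. Exchanging the sums gives
`∑ᵤ h u ∑_{x ⊆ u} ω x`, and for a face `u` the inner sum runs over all nonempty subsets of `u`
(the complex is closed under them), so it is the Euler characteristic of a simplex,
`1 - ∑_{x ⊆ u} (-1)^|x| = 1`.
-/

open Finset

theorem Finset.sum_powerset_erase_empty_neg_one_pow_card_sub_one {R α : Type*} [Ring R]
    [DecidableEq α] {u : Finset α} (hu : u.Nonempty) :
    ∑ x ∈ u.powerset.erase ∅, (-1 : R) ^ (#x - 1) = 1 := by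
  have hshift : ∀ x ∈ u.powerset.erase ∅, (-1 : R) ^ (#x - 1) = -(-1) ^ #x := by
    intro x hx
    obtain ⟨n, hn⟩ := Nat.exists_eq_add_one_of_ne_zero
      (card_ne_zero.mpr (nonempty_iff_ne_empty.mpr (ne_of_mem_erase hx)))
    rw [hn, Nat.add_sub_cancel, pow_succ, mul_neg_one, neg_neg]
  have hvanish : ∑ x ∈ u.powerset, (-1 : R) ^ #x = 0 := by
    exact_mod_cast congrArg (Int.cast : ℤ → R) (sum_powerset_neg_one_pow_card_of_nonempty hu)
  rw [sum_congr rfl hshift, sum_neg_distrib, sum_erase_eq_sub (empty_mem_powerset u), hvanish]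
  simp

theorem Finset.filter_subset_eq_powerset_erase_empty {α : Type*} [DecidableEq α]
    {G : Finset (Finset α)} (hne : ∀ x ∈ G, x.Nonempty)
    (hclosed : ∀ x ∈ G, ∀ y ⊆ x, y.Nonempty → y ∈ G) {u : Finset α} (hu : u ∈ G) :
    {x ∈ G | x ⊆ u} = u.powerset.erase ∅ := by
  ext x
  simp only [mem_filter, mem_erase, mem_powerset, ← nonempty_iff_ne_empty]
  exact ⟨fun ⟨hx, hxu⟩ ↦ ⟨hne x hx, hxu⟩, fun ⟨hx, hxu⟩ ↦ ⟨hclosed u hu x hxu hx, hxu⟩⟩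

theorem stmt_12 (G : Finset (Finset ℕ)) (hne : ∀ x ∈ G, x.Nonempty)
    (hclosed : ∀ x ∈ G, ∀ y ⊆ x, y.Nonempty → y ∈ G)
    (h : Finset ℕ → ℝ)
    (ω : Finset ℕ → ℝ) (hω : ∀ u, ω u = (-1 : ℝ) ^ (u.card - 1)) :
    (∑ x ∈ G, ω x * (ω x * ω x * ∑ u ∈ G.filter (fun u => x ⊆ u), h u))
      = ∑ x ∈ G, h x := by
  have hsq : ∀ x, ω x * ω x = 1 := fun x ↦ by
    rw [hω, ← mul_pow, neg_one_mul, neg_neg, one_pow]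
  calc (∑ x ∈ G, ω x * (ω x * ω x * ∑ u ∈ G with x ⊆ u, h u))
      = ∑ x ∈ G, ∑ u ∈ G, if x ⊆ u then ω x * h u else 0 := by
        simp only [hsq, one_mul, mul_sum, sum_filter, mul_ite, mul_zero]
    _ = ∑ u ∈ G, (∑ x ∈ G with x ⊆ u, ω x) * h u := by
        rw [sum_comm]
        simp only [sum_filter, sum_mul, ite_mul, zero_mul]
    _ = ∑ u ∈ G, h u := sum_congr rfl fun u hu ↦ by
        rw [filter_subset_eq_powerset_erase_empty hne hclosed hu, sum_congr rfl fun x _ ↦ hω x,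
          sum_powerset_erase_empty_neg_one_pow_card_sub_one (hne u hu), one_mul]
end

section
/- Let G be a finite set of finite nonempty sets with constant energy h = 1. Then the matrices L^{--}(x,y) = |{u ∈ G : u ⊆ x and u ⊆ y}| and L^{++}(x,y) = |{u ∈ G : x ⊆ u and y ⊆ u}| have the same characteristic polynomial (they are isospectral). -/
/-!
With `A x u = [u ⊆ x]` the inclusion matrix of `G`, one has `L⁻⁻ = A Aᵀ` and `L⁺⁺ = Aᵀ A`,
and `A B` and `B A` always have the same characteristic polynomial.
-/

open Matrix Finset

def incidenceMatrix {ι κ : Type*} (R : Type*) [Zero R] [One R] (r : ι → κ → Prop)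
    [∀ i k, Decidable (r i k)] : Matrix ι κ R :=
  of fun i k => if r i k then 1 else 0

section IncidenceMatrix

variable {ι κ R : Type*} (r : ι → κ → Prop) [∀ i k, Decidable (r i k)]

theorem transpose_incidenceMatrix [Zero R] [One R] :
    (incidenceMatrix R r)ᵀ = incidenceMatrix R (fun k i => r i k) :=
  rfl

theorem incidenceMatrix_mul_transpose_apply [Fintype κ] [NonAssocSemiring R] (i j : ι) :
    (incidenceMatrix R r * (incidenceMatrix R r)ᵀ) i j = #{k | r i k ∧ r j k} := by
  simp only [incidenceMatrix, mul_apply, transpose_apply, of_apply, ite_zero_mul_ite_zero,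
    mul_one]
  rw [sum_boole]

end IncidenceMatrix

theorem Finset.card_filter_univ_subtype {α : Type*} (s : Finset α) (p : α → Prop)
    [DecidablePred p] : #{x : s | p x} = #(s.filter p) := by
  rw [univ_eq_attach, filter_attach, card_map, card_attach]

theorem stmt_15_general (G : Finset (Finset ℕ))
    (Lmm Lpp : Matrix {x // x ∈ G} {x // x ∈ G} ℤ)
    (hLmm : ∀ x y, Lmm x y = ((G.filter (fun u => u ⊆ x.1 ∧ u ⊆ y.1)).card : ℤ))
    (hLpp : ∀ x y, Lpp x y = ((G.filter (fun u => x.1 ⊆ u ∧ y.1 ⊆ u)).card : ℤ)) :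
    Lmm.charpoly = Lpp.charpoly := by
  set A := incidenceMatrix ℤ (fun x u : G => u.1 ⊆ x.1)
  have hLmm_eq : Lmm = A * Aᵀ := by
    ext x y
    rw [hLmm, incidenceMatrix_mul_transpose_apply,
      card_filter_univ_subtype G fun u => u ⊆ x.1 ∧ u ⊆ y.1]
  have hLpp_eq : Lpp = Aᵀ * Aᵀᵀ := by
    ext x y
    rw [hLpp, transpose_incidenceMatrix, incidenceMatrix_mul_transpose_apply,
      card_filter_univ_subtype G fun u => x.1 ⊆ u ∧ y.1 ⊆ u]
  rw [hLmm_eq, hLpp_eq, transpose_transpose, charpoly_mul_comm]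

theorem stmt_15 (G : Finset (Finset ℕ)) (hne : ∀ x ∈ G, x.Nonempty)
    (Lmm Lpp : Matrix {x // x ∈ G} {x // x ∈ G} ℤ)
    (hLmm : ∀ x y, Lmm x y = ((G.filter (fun u => u ⊆ x.1 ∧ u ⊆ y.1)).card : ℤ))
    (hLpp : ∀ x y, Lpp x y = ((G.filter (fun u => x.1 ⊆ u ∧ y.1 ⊆ u)).card : ℤ)) :
    Lmm.charpoly = Lpp.charpoly :=
  stmt_15_general G Lmm Lpp hLmm hLpp
end
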